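/- arXiv:0707.2124 — 8 statements merged into one kernel-verified Lean document; each statement's English description precedes it below -/
import Mathlib

section
/- For every real number b > 0 and every natural number n ≥ 1, the integral from 0 to b of (ln t)/(1+t)^{n+1} dt equals (1/n)·(1 - (1+b)^{-n})·ln b - (1/n)·ln(1+b) - (1/(n·(1+b)^{n-1}))·∑_{j=1}^{n-1} C(n-1, j)·H_j·b^j, where H_j = ∑_{i=1}^{j} 1/i is the j-th harmonic number and C(n-1, j) is the binomial coefficient. -/
open Real Finset

noncomputable def Hh : ℕ → ℝ := fun j => ∑ i ∈ Finset.Icc 1 j, (1:ℝ)/i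

lemma hIcc_range (m : ℕ) (f : ℕ → ℝ) :
    ∑ j ∈ Finset.Icc 1 m, f j = ∑ i ∈ Finset.range m, f (i + 1) := by
  rw [← Finset.Ico_add_one_right_eq_Icc, Finset.sum_Ico_eq_sum_range]
  simp [Nat.add_comm]

lemma Hh_zero : Hh 0 = 0 := by simp [Hh]

lemma Hh_succ (i : ℕ) : Hh (i+1) = Hh i + 1/((i:ℝ)+1) := by
  rw [Hh, Hh, Finset.sum_Icc_succ_top (Nat.succ_le_succ (Nat.zero_le i))]
  push_cast
  ring

lemma key_identity (m : ℕ) (x : ℝ) :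
    x * (1 + x) *
        ∑ j ∈ Finset.Icc 1 m,
          (m.choose j : ℝ) * Hh j * ((j:ℝ) * x ^ (j - 1)) =
      (m:ℝ) * x *
          (∑ j ∈ Finset.Icc 1 m, (m.choose j : ℝ) * Hh j * x ^ j)
        + ((1 + x) ^ m - 1) := by
  have hbin : (1 + x) ^ m - 1 = ∑ i ∈ Finset.range m, (m.choose (i+1) : ℝ) * x ^ (i+1) := by
    rw [add_comm (1:ℝ) x, add_pow]
    rw [Finset.sum_range_succ']
    simp [mul_comm]
  rw [hIcc_range, hIcc_range, hbin]
  simp only [Nat.add_sub_cancel]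
  rw [← sub_eq_iff_eq_add', Finset.mul_sum, Finset.mul_sum, ← Finset.sum_sub_distrib]
  have shift : ∑ i ∈ Finset.range m,
      ((((i:ℝ)+1) - m) * ((m.choose (i+1) : ℝ) * Hh (i+1))) * x ^ (i+2)
      = ∑ i ∈ Finset.range m, (((i:ℝ) - m) * ((m.choose i : ℝ) * Hh i)) * x ^ (i+1) := by
    match m with
    | 0 => simp
    | (k+1) =>
      rw [Finset.sum_range_succ, Finset.sum_range_succ', Hh_zero]
      push_cast
      simp only [sub_self, zero_mul, mul_zero, add_zero, zero_add]
  have expand : ∀ i ∈ Finset.range m,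
      x * (1 + x) * ((m.choose (i+1) : ℝ) * Hh (i+1) * ((((i:ℕ)+1 : ℕ) : ℝ) * x ^ i))
        - (m:ℝ) * x * ((m.choose (i+1) : ℝ) * Hh (i+1) * x ^ (i+1))
      = (((i:ℝ)+1) * ((m.choose (i+1) : ℝ) * Hh (i+1))) * x ^ (i+1)
        + ((((i:ℝ)+1) - m) * ((m.choose (i+1) : ℝ) * Hh (i+1))) * x ^ (i+2) := by
    intro i _
    push_cast
    ring
  rw [Finset.sum_congr rfl expand, Finset.sum_add_distrib, shift, ← Finset.sum_add_distrib]
  apply Finset.sum_congr rfl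
  intro i hi
  have him : i < m := Finset.mem_range.mp hi
  have e : (m.choose (i+1) : ℝ) * ((i:ℝ)+1) = (m.choose i : ℝ) * ((m:ℝ) - (i:ℝ)) := by
    have hnat := Nat.choose_succ_right_eq m i
    have h2 := congrArg (fun t : ℕ => (t:ℝ)) hnat
    push_cast [Nat.cast_sub him.le] at h2
    linarith
  have hinv : (((i:ℝ)+1)) * (1/((i:ℝ)+1)) = 1 := by
    have : ((i:ℝ)+1) ≠ 0 := by positivity
    field_simp
  rw [Hh_succ]
  linear_combination (Hh i * x^(i+1)) * e + ((m.choose (i+1) : ℝ) * x^(i+1)) * hinv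

lemma hasDerivAt_G (m : ℕ) (x : ℝ) (hx : 0 < x) :
    HasDerivAt (fun t : ℝ =>
      (1 / ((m+1:ℕ):ℝ)) * (1 - ((1 + t) ^ (m+1))⁻¹) * Real.log t
      - (1 / ((m+1:ℕ):ℝ)) * Real.log (1 + t)
      - (1 / (((m+1:ℕ):ℝ) * (1 + t) ^ m)) *
          ∑ j ∈ Finset.Icc 1 m, (m.choose j : ℝ) * Hh j * t ^ j)
      (Real.log x / (1 + x) ^ (m + 2)) x := by
  have hy : (0:ℝ) < 1 + x := by linarith
  have hy1 : (1 + x) ≠ 0 := ne_of_gt hy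
  have hN : ((m+1:ℕ):ℝ) ≠ 0 := by positivity
  have hP : ((1:ℝ) + x) ^ m ≠ 0 := pow_ne_zero _ hy1
  have hyx : HasDerivAt (fun t : ℝ => 1 + t) 1 x := (hasDerivAt_id x).const_add 1
  -- derivative of (1+t)^(m+1) inverse, cleaned
  have hpow : HasDerivAt (fun t : ℝ => (1+t)^(m+1))
      (((m+1:ℕ):ℝ) * (1+x)^m * 1) x := hyx.pow (m+1)
  have hinv : HasDerivAt (fun t : ℝ => ((1+t)^(m+1))⁻¹)
      (-(((m+1:ℕ):ℝ) * (1+x)^m * 1) / ((1+x)^(m+1))^2) x :=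
    hpow.inv (pow_ne_zero _ hy1)
  have hinv' : HasDerivAt (fun t : ℝ => ((1+t)^(m+1))⁻¹)
      (-(((m+1:ℕ):ℝ) / ((1+x)^m * (1+x)^2))) x := by
    convert hinv using 1
    rw [pow_succ]
    field_simp
    ring
  have hu1 : HasDerivAt (fun t : ℝ => (1 / ((m+1:ℕ):ℝ)) * (1 - ((1 + t) ^ (m+1))⁻¹))
      (1 / ((1+x)^m * (1+x)^2)) x := by
    have := (hinv'.const_sub 1).const_mul (1 / ((m+1:ℕ):ℝ))
    refine this.congr_deriv (Eq.symm ?_)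
    field_simp
  have h1 : HasDerivAt (fun t : ℝ =>
      (1 / ((m+1:ℕ):ℝ)) * (1 - ((1 + t) ^ (m+1))⁻¹) * Real.log t)
      ((1 / ((1+x)^m * (1+x)^2)) * Real.log x
        + (1 / ((m+1:ℕ):ℝ)) * (1 - ((1 + x) ^ (m+1))⁻¹) * x⁻¹) x :=
    hu1.mul (Real.hasDerivAt_log (ne_of_gt hx))
  have h2 : HasDerivAt (fun t : ℝ => (1 / ((m+1:ℕ):ℝ)) * Real.log (1 + t))
      ((1 / ((m+1:ℕ):ℝ)) * (1 / (1+x))) x := by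
    have := (hyx.log hy1).const_mul (1 / ((m+1:ℕ):ℝ))
    convert this using 1
  -- derivative of 1/(N (1+t)^m), cleaned
  have hm1 : (m:ℝ) * (1+x)^(m-1) * (1+x) = (m:ℝ) * (1+x)^m := by
    match m with
    | 0 => simp
    | (k+1) =>
      simp only [Nat.add_sub_cancel]
      push_cast
      rw [pow_succ]
      ring
  have hden : HasDerivAt (fun t : ℝ => ((m+1:ℕ):ℝ) * (1+t)^m)
      (((m+1:ℕ):ℝ) * ((m:ℝ) * (1+x)^(m-1) * 1)) x := (hyx.pow m).const_mul _
  have hu : HasDerivAt (fun t : ℝ => 1 / (((m+1:ℕ):ℝ) * (1+t)^m))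
      (-((m:ℝ) / (((m+1:ℕ):ℝ) * (1+x)^m * (1+x)))) x := by
    have h := (hasDerivAt_const x (1:ℝ)).fun_div hden (by positivity)
    refine h.congr_deriv (Eq.symm ?_)
    rw [show (0 * (((m+1:ℕ):ℝ) * (1+x)^m) - 1 * (((m+1:ℕ):ℝ) * ((m:ℝ) * (1+x)^(m-1) * 1)))
        = -(((m+1:ℕ):ℝ) * ((m:ℝ) * (1+x)^(m-1))) from by ring]
    rw [neg_div, neg_inj, div_eq_div_iff (by positivity) (by positivity)]
    linear_combination (-(((m+1:ℕ):ℝ))^2 * (1+x)^m) * hm1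
  have hS : HasDerivAt (fun t : ℝ => ∑ j ∈ Finset.Icc 1 m, (m.choose j : ℝ) * Hh j * t ^ j)
      (∑ j ∈ Finset.Icc 1 m, (m.choose j : ℝ) * Hh j * ((j:ℝ) * x ^ (j-1))) x := by
    apply HasDerivAt.fun_sum
    intro j _
    exact (hasDerivAt_pow j x).const_mul _
  have h3 := hu.fun_mul hS
  have total := (h1.fun_sub h2).fun_sub h3
  refine total.congr_deriv (Eq.symm ?_)
  have hS' : (∑ j ∈ Finset.Icc 1 m, (m.choose j : ℝ) * Hh j * ((j:ℝ) * x ^ (j-1)))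
      = ((m:ℝ) * x * (∑ j ∈ Finset.Icc 1 m, (m.choose j : ℝ) * Hh j * x ^ j)
          + ((1 + x) ^ m - 1)) / (x * (1 + x)) := by
    rw [eq_div_iff (by positivity)]
    linear_combination key_identity m x
  rw [hS']
  rw [show (1+x)^(m+2) = (1+x)^m * (1+x)^2 by rw [pow_add]]
  rw [show (1+x)^(m+1) = (1+x)^m * (1+x) by rw [pow_succ]]
  field_simp
  ring

lemma intervalIntegrable_log_zero (c : ℝ) (hc : 0 < c) (hc1 : c ≤ 1) :
    IntervalIntegrable Real.log MeasureTheory.volume 0 c := by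
  have hcont : ContinuousOn (fun t : ℝ => t - t * Real.log t) (Set.Icc 0 c) :=
    (continuous_id.sub Real.continuous_mul_log).continuousOn
  have hderiv : ∀ x ∈ Set.Ioo (0:ℝ) c,
      HasDerivAt (fun t : ℝ => t - t * Real.log t) (-Real.log x) x := by
    intro x hx
    have h := (hasDerivAt_id x).sub (Real.hasDerivAt_mul_log (ne_of_gt hx.1))
    refine h.congr_deriv (Eq.symm ?_)
    ring
  have hpos : ∀ x ∈ Set.Ioo (0:ℝ) c, 0 ≤ -Real.log x := fun x hx =>
    neg_nonneg.2 (Real.log_nonpos hx.1.le (hx.2.le.trans hc1))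
  have hint := intervalIntegral.integrableOn_deriv_of_nonneg hcont hderiv hpos
  rw [intervalIntegrable_iff_integrableOn_Ioc_of_le hc.le]
  have h2 := hint.neg
  have h3 : (-(fun x : ℝ => -Real.log x)) = Real.log := by funext x; simp
  rwa [h3] at h2

lemma intervalIntegrable_log' (c : ℝ) (hc : 0 < c) :
    IntervalIntegrable Real.log MeasureTheory.volume 0 c := by
  rcases le_or_gt c 1 with h1 | h1
  · exact intervalIntegrable_log_zero c hc h1
  · refine (intervalIntegrable_log_zero 1 one_pos le_rfl).trans ?_
    apply intervalIntegral.intervalIntegrable_log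
    intro h
    rcases Set.mem_uIcc.mp h with ⟨h2, _⟩ | ⟨h2, _⟩ <;> linarith

lemma integrand_integrable (b : ℝ) (hb : 0 < b) (n : ℕ) :
    IntervalIntegrable (fun t : ℝ => Real.log t / (1 + t) ^ (n+1))
      MeasureTheory.volume 0 b := by
  apply (intervalIntegrable_log' b hb).mono_fun
  · exact (Real.measurable_log.div
      ((measurable_const.add measurable_id).pow_const (n+1))).aestronglyMeasurable
  · rw [Filter.EventuallyLE, MeasureTheory.ae_restrict_iff' measurableSet_uIoc]
    refine MeasureTheory.ae_of_all _ fun x hx => ?_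
    rw [Set.uIoc_of_le hb.le] at hx
    have hx0 : 0 < x := hx.1
    have h1 : (1:ℝ) ≤ (1 + x) ^ (n+1) := one_le_pow₀ (by linarith)
    simp only [Real.norm_eq_abs, abs_div]
    rw [abs_of_pos (by positivity : (0:ℝ) < (1+x)^(n+1))]
    exact div_le_self (abs_nonneg _) h1

lemma tendsto_G_zero (m : ℕ) :
    Filter.Tendsto (fun t : ℝ =>
      (1 / ((m+1:ℕ):ℝ)) * (1 - ((1 + t) ^ (m+1))⁻¹) * Real.log t
      - (1 / ((m+1:ℕ):ℝ)) * Real.log (1 + t)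
      - (1 / (((m+1:ℕ):ℝ) * (1 + t) ^ m)) *
          ∑ j ∈ Finset.Icc 1 m, (m.choose j : ℝ) * Hh j * t ^ j)
      (nhdsWithin 0 (Set.Ioi 0)) (nhds 0) := by
  have hN : ((m+1:ℕ):ℝ) ≠ 0 := by positivity
  have hlim : Filter.Tendsto (fun t : ℝ => t * Real.log t)
      (nhdsWithin 0 (Set.Ioi 0)) (nhds 0) := by
    have h := tendsto_log_mul_rpow_nhdsGT_zero zero_lt_one
    simp only [Real.rpow_one] at h
    simpa [mul_comm] using h
  -- first term
  have hcont1 : ContinuousAt (fun t : ℝ =>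
      (1 / ((m+1:ℕ):ℝ)) * ((∑ i ∈ Finset.range (m+1), (1+t)^i) * ((1+t)^(m+1))⁻¹)) 0 := by
    apply continuousAt_const.mul
    apply ContinuousAt.mul
    · exact Continuous.continuousAt (by continuity)
    · exact ContinuousAt.inv₀ (Continuous.continuousAt (by continuity)) (by norm_num)
  have T1 : Filter.Tendsto (fun t : ℝ =>
      (1 / ((m+1:ℕ):ℝ)) * (1 - ((1 + t) ^ (m+1))⁻¹) * Real.log t)
      (nhdsWithin 0 (Set.Ioi 0)) (nhds 0) := by
    have hmul := (hcont1.tendsto.mono_left nhdsWithin_le_nhds).mul hlim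
    rw [mul_zero] at hmul
    apply hmul.congr'
    filter_upwards [self_mem_nhdsWithin] with t (ht : (0:ℝ) < t)
    have hy1 : (1 + t) ≠ 0 := by positivity
    have hP : ((1:ℝ) + t) ^ (m+1) ≠ 0 := pow_ne_zero _ hy1
    have hgeom : (∑ i ∈ Finset.range (m+1), (1+t)^i) * t = (1+t)^(m+1) - 1 := by
      have h := geom_sum_mul (1+t) (m+1)
      simpa using h
    field_simp
    linear_combination Real.log t * hgeom
  have T2 : Filter.Tendsto (fun t : ℝ => (1 / ((m+1:ℕ):ℝ)) * Real.log (1 + t))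
      (nhdsWithin 0 (Set.Ioi 0)) (nhds 0) := by
    have c2 : ContinuousAt (fun t : ℝ => (1 / ((m+1:ℕ):ℝ)) * Real.log (1 + t)) 0 := by
      apply continuousAt_const.mul
      exact ContinuousAt.log (by fun_prop) (by norm_num)
    have := c2.tendsto.mono_left (nhdsWithin_le_nhds (s := Set.Ioi (0:ℝ)))
    simpa using this
  have T3 : Filter.Tendsto (fun t : ℝ => (1 / (((m+1:ℕ):ℝ) * (1 + t) ^ m)) *
      ∑ j ∈ Finset.Icc 1 m, (m.choose j : ℝ) * Hh j * t ^ j)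
      (nhdsWithin 0 (Set.Ioi 0)) (nhds 0) := by
    have c3 : ContinuousAt (fun t : ℝ => (1 / (((m+1:ℕ):ℝ) * (1 + t) ^ m)) *
        ∑ j ∈ Finset.Icc 1 m, (m.choose j : ℝ) * Hh j * t ^ j) 0 := by
      apply ContinuousAt.mul
      · exact ContinuousAt.div continuousAt_const (Continuous.continuousAt (by continuity))
          (by positivity)
      · exact Continuous.continuousAt (by continuity)
    have := c3.tendsto.mono_left (nhdsWithin_le_nhds (s := Set.Ioi (0:ℝ)))
    have hS0 : (∑ j ∈ Finset.Icc 1 m, (m.choose j : ℝ) * Hh j * (0:ℝ) ^ j) = 0 := by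
      apply Finset.sum_eq_zero
      intro j hj
      have : j ≠ 0 := by
        have := (Finset.mem_Icc.mp hj).1; omega
      rw [zero_pow this, mul_zero]
    simpa [hS0] using this
  have := (T1.sub T2).sub T3
  simpa using this

/-- GR 4.231-type evaluation (Corollary of Theorem in Section 4):
for `b > 0` and `n ≥ 1`,
`∫_0^b ln t / (1+t)^(n+1) dt = (1/n)(1 - (1+b)^{-n}) ln b - (1/n) ln(1+b)
  - (1/(n (1+b)^{n-1})) ∑_{j=1}^{n-1} C(n-1,j) H_j b^j`. -/
theorem integral_log_div_one_add_pow (b : ℝ) (hb : 0 < b) (n : ℕ) (hn : 1 ≤ n) :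
    ∫ t in (0:ℝ)..b, Real.log t / (1 + t) ^ (n + 1) =
      (1 / n) * (1 - ((1 + b) ^ n)⁻¹) * Real.log b
      - (1 / n) * Real.log (1 + b)
      - (1 / (n * (1 + b) ^ (n - 1))) *
          ∑ j ∈ Finset.Icc 1 (n - 1),
            ((n - 1).choose j : ℝ) * (∑ i ∈ Finset.Icc 1 j, (1 : ℝ) / i) * b ^ j := by

  obtain ⟨m, rfl⟩ : ∃ m, n = m + 1 := ⟨n - 1, (Nat.succ_pred_eq_of_pos hn).symm⟩
  simp only [Nat.add_sub_cancel]
  have hderiv : ∀ x ∈ Set.Ioo (0:ℝ) b, HasDerivAt (fun t : ℝ =>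
      (1 / ((m+1:ℕ):ℝ)) * (1 - ((1 + t) ^ (m+1))⁻¹) * Real.log t
      - (1 / ((m+1:ℕ):ℝ)) * Real.log (1 + t)
      - (1 / (((m+1:ℕ):ℝ) * (1 + t) ^ m)) *
          ∑ j ∈ Finset.Icc 1 m, (m.choose j : ℝ) * Hh j * t ^ j)
      (Real.log x / (1 + x) ^ (m + 1 + 1)) x := fun x hx => hasDerivAt_G m x hx.1
  have hbt : Filter.Tendsto (fun t : ℝ =>
      (1 / ((m+1:ℕ):ℝ)) * (1 - ((1 + t) ^ (m+1))⁻¹) * Real.log t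
      - (1 / ((m+1:ℕ):ℝ)) * Real.log (1 + t)
      - (1 / (((m+1:ℕ):ℝ) * (1 + t) ^ m)) *
          ∑ j ∈ Finset.Icc 1 m, (m.choose j : ℝ) * Hh j * t ^ j)
      (nhdsWithin b (Set.Iio b)) (nhds (
      (1 / ((m+1:ℕ):ℝ)) * (1 - ((1 + b) ^ (m+1))⁻¹) * Real.log b
      - (1 / ((m+1:ℕ):ℝ)) * Real.log (1 + b)
      - (1 / (((m+1:ℕ):ℝ) * (1 + b) ^ m)) *
          ∑ j ∈ Finset.Icc 1 m, (m.choose j : ℝ) * Hh j * b ^ j)) :=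
    ((hasDerivAt_G m b hb).continuousAt.tendsto).mono_left nhdsWithin_le_nhds
  have hFTC := intervalIntegral.integral_eq_sub_of_hasDerivAt_of_tendsto hb hderiv
    (integrand_integrable b hb (m+1)) (tendsto_G_zero m) hbt
  rw [hFTC, sub_zero]
  simp [Hh]
end

section
/- For every natural number n ≥ 1, the integral from 0 to 1 of (ln t)/(1+t)^{n+1} dt equals -(ln 2)/n - (1/(n·2^{n-1}))·∑_{j=1}^{n-1} C(n-1, j)·H_j, where H_j = ∑_{i=1}^{j} 1/i is the j-th harmonic number. -/
/-!
Integrate by parts against the primitive `(1 - (1 + t)⁻ⁿ) / n` of `(1 + t)^-(n+1)`. It vanishes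
at `0`, so the boundary term `log t · (1 - (1 + t)⁻ⁿ) ~ n t log t` dies there, and since
`(1 - (1 + t)⁻ⁿ) / t = ∑_{k=1}^{n} (1 + t)⁻ᵏ` the integral becomes
`-(1/n) ∫₀¹ ∑_{k=1}^{n} (1 + t)⁻ᵏ dt = -(1/n) (log 2 + H_{n-1} - ∑_{k=1}^{n-1} 1 / (k 2ᵏ))`.
The binomial sum is matched by `∑_j C(N, j) H_j = 2ᴺ (H_N - ∑_{k=1}^{N} 1 / (k 2ᵏ))`, which follows
by induction on `N` from Pascal's rule and `∑_i C(N, i) / (i + 1) = (2ᴺ⁺¹ - 1) / (N + 1)`.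
-/

open Real Finset

theorem sum_range_choose_div_add_one {K : Type*} [Field K] [CharZero K] (N : ℕ) :
    ∑ i ∈ range (N + 1), (N.choose i : K) / (i + 1) = (2 ^ (N + 1) - 1) / (N + 1) := by
  have hterm (i : ℕ) : (N.choose i : K) / (i + 1) = ((N + 1).choose (i + 1) : K) / (N + 1) := by
    rw [div_eq_div_iff i.cast_add_one_ne_zero N.cast_add_one_ne_zero, mul_comm]
    exact_mod_cast Nat.add_one_mul_choose_eq N i
  have hsum : ∑ i ∈ range (N + 1), ((N + 1).choose (i + 1) : K) = 2 ^ (N + 1) - 1 := by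
    have h := Nat.sum_range_choose (N + 1)
    rw [sum_range_succ'] at h
    rw [eq_sub_iff_add_eq]
    exact_mod_cast h
  rw [sum_congr rfl fun i _ => hterm i, ← sum_div, hsum]

theorem sum_range_choose_mul_harmonic (N : ℕ) :
    ∑ j ∈ range (N + 1), (N.choose j : ℚ) * harmonic j =
      2 ^ N * (harmonic N - ∑ k ∈ range N, ((2 : ℚ) ^ (k + 1))⁻¹ / (k + 1)) := by
  induction N with
  | zero => simp
  | succ N ih =>
    have hpascal := sum_choose_succ_mul (fun i _ => harmonic i) N
    have hshift : ∑ i ∈ range (N + 1), (N.choose i : ℚ) * harmonic (i + 1) =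
        ∑ i ∈ range (N + 1), (N.choose i : ℚ) * harmonic i + (2 ^ (N + 1) - 1) / (N + 1) := by
      rw [← sum_range_choose_div_add_one, ← sum_add_distrib]
      refine sum_congr rfl fun i _ => ?_
      rw [harmonic_succ]
      push_cast
      ring
    rw [hpascal, hshift, ih, sum_range_succ, harmonic_succ]
    push_cast
    field_simp
    ring

theorem one_sub_inv_pow_eq_mul_sum {K : Type*} [Field K] {u : K} (hu : u ≠ 0) (n : ℕ) :
    1 - (u ^ n)⁻¹ = (u - 1) * ∑ k ∈ range n, (u ^ (k + 1))⁻¹ := by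
  induction n with
  | zero => simp
  | succ n ih =>
    rw [sum_range_succ, mul_add, ← ih]
    field_simp
    ring

theorem hasDerivAt_inv_one_add_pow (m : ℕ) {x : ℝ} (hx : 1 + x ≠ 0) :
    HasDerivAt (fun x => ((1 + x) ^ m)⁻¹) (-(m * ((1 + x) ^ (m + 1))⁻¹)) x := by
  have h := (((hasDerivAt_id' x).const_add 1).fun_pow m).inv (pow_ne_zero m hx)
  refine h.congr_deriv ?_
  rcases m with _ | m
  · simp
  · rw [Nat.add_sub_cancel]
    field_simp
    ring

theorem hasDerivAt_log_one_add_sub_sum (N : ℕ) {x : ℝ} (hx : 1 + x ≠ 0) :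
    HasDerivAt (fun x => log (1 + x) - ∑ k ∈ range N, ((1 + x) ^ (k + 1))⁻¹ / (k + 1))
      (∑ k ∈ range (N + 1), ((1 + x) ^ (k + 1))⁻¹) x := by
  induction N with
  | zero => simpa using ((hasDerivAt_id x).const_add 1).log hx
  | succ N ih =>
    have h := (hasDerivAt_inv_one_add_pow (N + 1) hx).div_const ((N : ℝ) + 1)
    simp only [sum_range_succ _ N, ← sub_sub]
    refine (ih.sub h).congr_deriv ?_
    rw [sum_range_succ _ (N + 1)]
    field_simp
    push_cast
    ring

/-- The primitive produced by the integration by parts, for `n = N + 1`. -/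
noncomputable def logDivOneAddPowPrimitive (N : ℕ) (x : ℝ) : ℝ :=
  (log x * (1 - ((1 + x) ^ (N + 1))⁻¹) -
    (log (1 + x) - ∑ k ∈ range N, ((1 + x) ^ (k + 1))⁻¹ / (k + 1))) / (N + 1)

theorem hasDerivAt_logDivOneAddPowPrimitive (N : ℕ) {x : ℝ} (hx₀ : x ≠ 0) (hx : 1 + x ≠ 0) :
    HasDerivAt (logDivOneAddPowPrimitive N) (log x / (1 + x) ^ (N + 2)) x := by
  have h := (((hasDerivAt_log hx₀).mul ((hasDerivAt_inv_one_add_pow (N + 1) hx).const_sub 1)).sub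
    (hasDerivAt_log_one_add_sub_sum N hx)).div_const ((N : ℝ) + 1)
  refine h.congr_deriv ?_
  rw [one_sub_inv_pow_eq_mul_sum hx, add_sub_cancel_left]
  field_simp
  push_cast
  ring

theorem logDivOneAddPowPrimitive_eqOn (N : ℕ) :
    Set.EqOn (logDivOneAddPowPrimitive N)
      (fun x => (x * log x * ∑ k ∈ range (N + 1), ((1 + x) ^ (k + 1))⁻¹ -
        (log (1 + x) - ∑ k ∈ range N, ((1 + x) ^ (k + 1))⁻¹ / (k + 1))) / (N + 1))
      {x | 1 + x ≠ 0} := by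
  intro x (hx : 1 + x ≠ 0)
  simp only [logDivOneAddPowPrimitive, one_sub_inv_pow_eq_mul_sum hx,
    add_sub_cancel_left]
  ring

theorem continuousOn_logDivOneAddPowPrimitive (N : ℕ) :
    ContinuousOn (logDivOneAddPowPrimitive N) {x | 1 + x ≠ 0} := by
  refine ContinuousOn.congr ?_ (logDivOneAddPowPrimitive_eqOn N)
  have hinv (m : ℕ) : ContinuousOn (fun x : ℝ => ((1 + x) ^ m)⁻¹) {x | 1 + x ≠ 0} :=
    (continuousOn_const.add continuousOn_id).pow m |>.inv₀ fun x hx => pow_ne_zero m hx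
  have hlog : ContinuousOn (fun x : ℝ => log (1 + x)) {x | 1 + x ≠ 0} :=
    (continuousOn_const.add continuousOn_id).log fun x hx => hx
  exact ((continuous_mul_log.continuousOn.mul (continuousOn_finsetSum _ fun k _ => hinv (k + 1))).sub
    (hlog.sub (continuousOn_finsetSum _ fun k _ => (hinv (k + 1)).div_const _))).div_const _

theorem integral_log_div_one_add_pow_eq_sub (N : ℕ) :
    ∫ t in (0 : ℝ)..1, log t / (1 + t) ^ (N + 2) =
      logDivOneAddPowPrimitive N 1 - logDivOneAddPowPrimitive N 0 := by
  have hcont : ContinuousOn (logDivOneAddPowPrimitive N) (Set.Icc 0 1) :=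
    (continuousOn_logDivOneAddPowPrimitive N).mono fun x hx =>
      (show (0 : ℝ) < 1 + x by linarith [hx.1]).ne'
  have hderiv : ∀ x ∈ Set.Ioo (0 : ℝ) 1,
      HasDerivAt (logDivOneAddPowPrimitive N) (log x / (1 + x) ^ (N + 2)) x :=
    fun x hx => hasDerivAt_logDivOneAddPowPrimitive N hx.1.ne' (by linarith [hx.1])
  -- The integrand has constant sign on `(0, 1)`, which makes it integrable despite `log 0⁺ = -∞`.
  have hint : IntervalIntegrable (fun t => log t / (1 + t) ^ (N + 2)) MeasureTheory.volume 0 1 := by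
    have h := intervalIntegral.integrableOn_deriv_of_nonneg hcont.neg (fun x hx => (hderiv x hx).neg)
      fun x hx => neg_nonneg.2 <| div_nonpos_of_nonpos_of_nonneg (log_nonpos hx.1.le hx.2.le)
        (pow_pos (by linarith [hx.1]) _).le
    rw [intervalIntegrable_iff_integrableOn_Ioc_of_le zero_le_one]
    simpa using h.neg
  exact intervalIntegral.integral_eq_sub_of_hasDerivAt_of_le zero_le_one hcont hderiv hint

theorem logDivOneAddPowPrimitive_zero (N : ℕ) :
    logDivOneAddPowPrimitive N 0 = harmonic N / (N + 1) := by
  simp [logDivOneAddPowPrimitive, harmonic]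

theorem logDivOneAddPowPrimitive_one (N : ℕ) :
    logDivOneAddPowPrimitive N 1 =
      -(log 2 - ∑ k ∈ range N, ((2 : ℝ) ^ (k + 1))⁻¹ / (k + 1)) / (N + 1) := by
  norm_num [logDivOneAddPowPrimitive]

theorem sum_Icc_choose_mul_harmonic (N : ℕ) :
    ∑ j ∈ Icc 1 N, (N.choose j : ℝ) * harmonic j =
      2 ^ N * (harmonic N - ∑ k ∈ range N, ((2 : ℝ) ^ (k + 1))⁻¹ / (k + 1)) := by
  have h := congrArg (Rat.cast : ℚ → ℝ) (sum_range_choose_mul_harmonic N)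
  push_cast at h
  rw [range_eq_Ico, sum_eq_sum_Ico_succ_bot N.add_one_pos, zero_add, Ico_add_one_right_eq_Icc] at h
  simpa using h

/-- For `n ≥ 1`,
`∫_0^1 ln t / (1+t)^(n+1) dt = -(ln 2)/n - (1/(n 2^{n-1})) ∑_{j=1}^{n-1} C(n-1,j) H_j`. -/
theorem integral_log_div_one_add_pow_one (n : ℕ) (hn : 1 ≤ n) :
    ∫ t in (0:ℝ)..1, Real.log t / (1 + t) ^ (n + 1) =
      -Real.log 2 / n
      - (1 / (n * 2 ^ (n - 1))) *
          ∑ j ∈ Finset.Icc 1 (n - 1),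
            ((n - 1).choose j : ℝ) * (∑ i ∈ Finset.Icc 1 j, (1 : ℝ) / i) := by
  obtain ⟨N, rfl⟩ : ∃ N, n = N + 1 := ⟨n - 1, by omega⟩
  have hH (j : ℕ) : ∑ i ∈ Icc 1 j, (1 : ℝ) / i = harmonic j := by
    simp [harmonic_eq_sum_Icc]
  rw [integral_log_div_one_add_pow_eq_sub, logDivOneAddPowPrimitive_one,
    logDivOneAddPowPrimitive_zero, Nat.add_sub_cancel]
  simp only [hH, sum_Icc_choose_mul_harmonic]
  push_cast
  field_simp
  ring
end

section
/- For every natural number n ≥ 1, the integral from 0 to ∞ of (ln x)/(1+x^2)^{n+1} dx equals -(π/2^{2n+1})·C(2n, n)·∑_{k=1}^{n} 1/(2k-1), where C(2n, n) is the central binomial coefficient. -/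
/-!
Integrating the derivative of `x g(x) / (1 + x²)^(n+1)` over `(0, ∞)` gives, whenever
`x g(x) → 0` at `0` and `g(x) / x → 0` at `∞`, the recurrence
`(2n+2) ∫ g/(1+x²)^(n+2) = (2n+1) ∫ g/(1+x²)^(n+1) - ∫ x g'(x)/(1+x²)^(n+1)`.
For `g = 1` it yields `∫ 1/(1+x²)^(n+1) = π C(2n,n) / 2^(2n+1)`. For `g = log`, where
`x g'(x) = 1`, it expresses the `(n+1)`-st logarithmic integral through the `n`-th one and that
integral; the induction starts at `n = 0`, where the integral vanishes because `x ↦ 1/x` turns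
`log x dx / (1 + x²)` into its negative.
-/

open Real Finset MeasureTheory Set Filter Topology

lemma integrableOn_log_div_one_add_sq :
    IntegrableOn (fun x : ℝ => log x / (1 + x ^ 2)) (Ioi 0) := by
  have hmeas (s : Set ℝ) :
      AEStronglyMeasurable (fun x : ℝ => log x / (1 + x ^ 2)) (volume.restrict s) :=
    Measurable.aestronglyMeasurable (by fun_prop)
  rw [← Ioc_union_Ioi_eq_Ioi zero_le_one]
  refine IntegrableOn.union ?_ ?_
  · have hlog : IntegrableOn log (Ioc (0 : ℝ) 1) :=
      (intervalIntegrable_iff_integrableOn_Ioc_of_le zero_le_one).1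
        intervalIntegral.intervalIntegrable_log'
    refine hlog.norm.mono' (hmeas _) (ae_of_all _ fun x => ?_)
    rw [norm_div, Real.norm_of_nonneg (by positivity : (0 : ℝ) ≤ 1 + x ^ 2)]
    exact div_le_self (norm_nonneg _) (le_add_of_nonneg_right (sq_nonneg x))
  · refine ((integrableOn_Ioi_rpow_of_lt (by norm_num : (-3 / 2 : ℝ) < -1) one_pos).const_mul
      2).mono' (hmeas _) ?_
    filter_upwards [ae_restrict_mem measurableSet_Ioi] with x (hx : 1 < x)
    have hx0 : 0 < x := one_pos.trans hx
    rw [Real.norm_of_nonneg (div_nonneg (log_nonneg hx.le) (by positivity))]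
    calc log x / (1 + x ^ 2) ≤ x ^ (1 / 2 : ℝ) / (1 / 2) / x ^ (2 : ℝ) := by
          rw [rpow_two]
          exact div_le_div₀ (by positivity) (log_le_rpow_div hx0.le (by norm_num)) (by positivity)
            (by linarith)
      _ = 2 * x ^ (-3 / 2 : ℝ) := by
          rw [div_right_comm, ← rpow_sub hx0]
          norm_num
          ring

lemma integrableOn_one_div_one_add_sq : IntegrableOn (fun x : ℝ => 1 / (1 + x ^ 2)) (Ioi 0) := by
  simpa only [one_div] using integrable_inv_one_add_sq.integrableOn

lemma MeasureTheory.IntegrableOn.div_one_add_sq_pow {g : ℝ → ℝ} {s : Set ℝ}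
    (hg : IntegrableOn (fun x => g x / (1 + x ^ 2)) s) (n : ℕ) :
    IntegrableOn (fun x => g x / (1 + x ^ 2) ^ (n + 1)) s := by
  have hbdd : ∀ x : ℝ, ‖((1 + x ^ 2) ^ n)⁻¹‖ ≤ 1 := fun x => by
    rw [norm_inv, norm_pow, Real.norm_of_nonneg (by positivity)]
    exact inv_le_one_of_one_le₀ (one_le_pow₀ (by nlinarith))
  refine (hg.bdd_mul (by fun_prop) (ae_of_all _ hbdd)).congr (ae_of_all _ fun x => ?_)
  simp only [div_eq_mul_inv, pow_succ (1 + x ^ 2) n, mul_inv]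
  ring

lemma hasDerivAt_mul_div_one_add_sq_pow {g : ℝ → ℝ} {g' x : ℝ} (hg : HasDerivAt g g' x)
    (n : ℕ) :
    HasDerivAt (fun y => y * g y / (1 + y ^ 2) ^ (n + 1))
      (x * g' / (1 + x ^ 2) ^ (n + 1) - (2 * n + 1) * (g x / (1 + x ^ 2) ^ (n + 1))
        + (2 * n + 2) * (g x / (1 + x ^ 2) ^ (n + 2))) x := by
  have hq := ((hasDerivAt_id' (x := x)).fun_pow 2 |>.const_add 1).fun_pow (n + 1)
  refine (((hasDerivAt_id' (x := x)).fun_mul hg).fun_div hq (by positivity)).congr_deriv ?_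
  simp only [Nat.add_sub_cancel]
  field_simp
  push_cast
  ring

lemma tendsto_mul_div_one_add_sq_pow_atTop {g : ℝ → ℝ}
    (hg : Tendsto (fun x => g x / x) atTop (𝓝 0)) (n : ℕ) :
    Tendsto (fun x => x * g x / (1 + x ^ 2) ^ (n + 1)) atTop (𝓝 0) := by
  refine squeeze_zero_norm' ?_ (by simpa using hg.norm)
  filter_upwards [eventually_gt_atTop 0] with x hx
  have hsq : x ^ 2 ≤ (1 + x ^ 2) ^ (n + 1) :=
    (le_add_of_nonneg_left zero_le_one).trans (le_self_pow₀ (by nlinarith) n.succ_ne_zero)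
  rw [norm_div, norm_mul, Real.norm_eq_abs, Real.norm_eq_abs, Real.norm_eq_abs, abs_of_pos hx,
    abs_of_pos (by positivity : (0 : ℝ) < (1 + x ^ 2) ^ (n + 1)),
    div_le_div_iff₀ (by positivity) hx]
  nlinarith [abs_nonneg (g x)]

theorem integral_div_one_add_sq_pow_recurrence {g g' : ℝ → ℝ} (n : ℕ)
    (hg_zero : ContinuousWithinAt (fun x => x * g x) (Ici 0) 0)
    (hg : ∀ x ∈ Ioi (0 : ℝ), HasDerivAt g (g' x) x)
    (hg_atTop : Tendsto (fun x => g x / x) atTop (𝓝 0))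
    (hg_int : IntegrableOn (fun x => g x / (1 + x ^ 2)) (Ioi 0))
    (hg'_int : IntegrableOn (fun x => x * g' x / (1 + x ^ 2) ^ (n + 1)) (Ioi 0)) :
    (2 * (n : ℝ) + 2) * ∫ x in Ioi 0, g x / (1 + x ^ 2) ^ (n + 2) =
      (2 * (n : ℝ) + 1) * (∫ x in Ioi 0, g x / (1 + x ^ 2) ^ (n + 1))
        - ∫ x in Ioi 0, x * g' x / (1 + x ^ 2) ^ (n + 1) := by
  have hint₁ := (hg_int.div_one_add_sq_pow n).const_mul (2 * n + 1 : ℝ)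
  have hint₂ : IntegrableOn (fun x => (2 * (n : ℝ) + 2) * (g x / (1 + x ^ 2) ^ (n + 2))) (Ioi 0) :=
    (hg_int.div_one_add_sq_pow (n + 1)).const_mul _
  have hftc := integral_Ioi_of_hasDerivAt_of_tendsto
    (hg_zero.div (by fun_prop : Continuous fun x : ℝ => (1 + x ^ 2) ^ (n + 1)).continuousWithinAt
      (by positivity))
    (fun x hx => hasDerivAt_mul_div_one_add_sq_pow (hg x hx) n) ((hg'_int.sub hint₁).add hint₂)
    (tendsto_mul_div_one_add_sq_pow_atTop hg_atTop n)
  rw [integral_add (hg'_int.sub' hint₁) hint₂, integral_sub hg'_int hint₁, integral_const_mul,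
    integral_const_mul] at hftc
  simp only [Pi.div_apply, zero_mul, zero_div, sub_zero] at hftc
  linarith

theorem integral_log_div_one_add_sq : ∫ x in Ioi (0 : ℝ), log x / (1 + x ^ 2) = 0 := by
  have hsubst := integral_comp_rpow_Ioi (fun x : ℝ => log x / (1 + x ^ 2)) (p := -1) (by norm_num)
  have hinv : ∫ x in Ioi (0 : ℝ), (|(-1 : ℝ)| * x ^ ((-1 : ℝ) - 1)) •
      (log (x ^ (-1 : ℝ)) / (1 + (x ^ (-1 : ℝ)) ^ 2)) = ∫ x in Ioi 0, -(log x / (1 + x ^ 2)) :=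
    setIntegral_congr_fun measurableSet_Ioi fun x (hx : 0 < x) => by
      have : 1 + x ^ 2 ≠ 0 := by positivity
      have := hx.ne'
      rw [rpow_neg_one, show (-1 : ℝ) - 1 = -2 by norm_num, rpow_neg hx.le, rpow_two, log_inv,
        smul_eq_mul, abs_neg, abs_one, one_mul, inv_pow]
      field_simp
      ring
  rw [hinv, integral_neg] at hsubst
  linarith

lemma cast_choose_two_mul_succ (n : ℕ) :
    ((2 * (n + 1)).choose (n + 1) : ℝ) = 2 * (2 * n + 1) / (n + 1) * (2 * n).choose n := by
  have h := Nat.succ_mul_centralBinom_succ n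
  simp only [Nat.centralBinom_eq_two_mul_choose] at h
  field_simp
  rw [mul_comm]
  exact_mod_cast h

theorem integral_one_div_one_add_sq_pow_s5 (n : ℕ) :
    ∫ x in Ioi (0 : ℝ), 1 / (1 + x ^ 2) ^ (n + 1) = π / 2 ^ (2 * n + 1) * (2 * n).choose n := by
  induction n with
  | zero => simp [integral_Ioi_inv_one_add_sq]
  | succ n ih =>
    have hrec := integral_div_one_add_sq_pow_recurrence (g := fun _ => 1) (g' := fun _ => 0) n
      (by fun_prop) (fun x _ => hasDerivAt_const x 1) (by simpa using tendsto_inv_atTop_zero)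
      integrableOn_one_div_one_add_sq (by simp)
    simp only [mul_zero, zero_div, integral_zero, sub_zero, ih] at hrec
    rw [← mul_right_inj' (by positivity : 2 * (n : ℝ) + 2 ≠ 0), hrec, cast_choose_two_mul_succ]
    field_simp
    ring

theorem integral_log_div_one_add_sq_pow_general (n : ℕ) :
    ∫ x in Set.Ioi (0:ℝ), Real.log x / (1 + x ^ 2) ^ (n + 1) =
      -(Real.pi / 2 ^ (2 * n + 1)) * (Nat.choose (2 * n) n : ℝ) *
        ∑ k ∈ Finset.Icc 1 n, 1 / (2 * (k : ℝ) - 1) := by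
  induction n with
  | zero => simpa using integral_log_div_one_add_sq
  | succ n ih =>
    have hJ : EqOn (fun x : ℝ => 1 / (1 + x ^ 2) ^ (n + 1))
        (fun x => x * x⁻¹ / (1 + x ^ 2) ^ (n + 1)) (Ioi 0) :=
      fun x (hx : 0 < x) => by simp only [mul_inv_cancel₀ hx.ne']
    have hrec := integral_div_one_add_sq_pow_recurrence (g := log) (g' := fun x => x⁻¹) n
      continuous_mul_log.continuousWithinAt (fun x hx => hasDerivAt_log hx.ne')
      isLittleO_log_id_atTop.tendsto_div_nhds_zero integrableOn_log_div_one_add_sq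
      ((integrableOn_one_div_one_add_sq.div_one_add_sq_pow n).congr_fun hJ measurableSet_Ioi)
    rw [← setIntegral_congr_fun measurableSet_Ioi hJ, integral_one_div_one_add_sq_pow_s5, ih] at hrec
    rw [← mul_right_inj' (by positivity : 2 * (n : ℝ) + 2 ≠ 0), hrec, cast_choose_two_mul_succ,
      sum_Icc_succ_top (Nat.le_add_left 1 n), Nat.cast_add_one,
      show 2 * ((n : ℝ) + 1) - 1 = 2 * n + 1 by ring]
    field_simp
    ring

/-- For `n ≥ 1`,
`∫_0^∞ ln x / (1+x²)^(n+1) dx = -(π/2^{2n+1}) C(2n,n) ∑_{k=1}^n 1/(2k-1)`. -/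
theorem integral_log_div_one_add_sq_pow (n : ℕ) (hn : 1 ≤ n) :
    ∫ x in Set.Ioi (0:ℝ), Real.log x / (1 + x ^ 2) ^ (n + 1) =
      -(Real.pi / 2 ^ (2 * n + 1)) * (Nat.choose (2 * n) n : ℝ) *
        ∑ k ∈ Finset.Icc 1 n, 1 / (2 * (k : ℝ) - 1) :=
  integral_log_div_one_add_sq_pow_general n
end

section
/- For every natural number n and every real number c > 0, the integral from 0 to ∞ of (ln x)/(c^2 + x^2)^{n+1} dx equals (π/(2c)^{2n+1})·C(2n, n)·(ln c - ∑_{k=1}^{n} 1/(2k-1)), where C(2n, n) is the central binomial coefficient. -/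
/-!
Write `A n = ∫₀^∞ (c² + x²)^-(n+1) dx` and `B n = ∫₀^∞ log x (c² + x²)^-(n+1) dx`.
Integrating the derivative of `x g(x) / (c² + x²)^(n+1)`, which vanishes at `0` and at `∞`,
for `g = 1` and `g = log` gives the reduction formulas
`(2n+2) c² A (n+1) = (2n+1) A n` and `(2n+2) c² B (n+1) = (2n+1) B n - A n`.
The substitution `x ↦ c²/x` maps `log x` to `2 log c - log x` and shows `B 0 = log c · A 0`,
so by induction `B n = A n (log c - ∑_{k=1}^n 1/(2k-1))`. Finally `A 0 = π/(2c)` (arctan), and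
the first recursion together with `(n+1) C(2n+2, n+1) = 2(2n+1) C(2n, n)` gives
`A n = π C(2n, n) / (2c)^(2n+1)`.
-/

open Real Finset MeasureTheory Set Filter Topology

section

variable {c : ℝ}

lemma continuous_inv_sq_add_sq_pow (hc : c ≠ 0) (n : ℕ) :
    Continuous fun x : ℝ => ((c ^ 2 + x ^ 2) ^ n)⁻¹ := by
  fun_prop (disch := intro x; positivity)

lemma integrableOn_div_sq_add_sq_pow {f : ℝ → ℝ} {s : Set ℝ} (hc : c ≠ 0)
    (hf : IntegrableOn (fun x => f x / (c ^ 2 + x ^ 2)) s) (n : ℕ) :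
    IntegrableOn (fun x => f x / (c ^ 2 + x ^ 2) ^ (n + 1)) s := by
  have hbound (x : ℝ) : ‖((c ^ 2 + x ^ 2) ^ n)⁻¹‖ ≤ ((c ^ 2) ^ n)⁻¹ := by
    rw [norm_inv, norm_pow, Real.norm_of_nonneg (by positivity)]
    gcongr
    exact le_add_of_nonneg_right (sq_nonneg x)
  refine (hf.mul_bdd (continuous_inv_sq_add_sq_pow hc n).aestronglyMeasurable
    (ae_of_all _ hbound)).congr (ae_of_all _ fun x => ?_)
  simp only [pow_succ' (c ^ 2 + x ^ 2), ← div_div, div_eq_mul_inv (f x / _)]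

lemma integrable_one_div_sq_add_sq (hc : c ≠ 0) :
    Integrable fun x : ℝ => 1 / (c ^ 2 + x ^ 2) := by
  refine ((integrable_inv_one_add_sq.comp_div hc).const_mul (c ^ 2)⁻¹).congr
    (ae_of_all _ fun x => ?_)
  field_simp

lemma integrableOn_log_div_sq_add_sq (hc : c ≠ 0) :
    IntegrableOn (fun x => log x / (c ^ 2 + x ^ 2)) (Ioi 0) := by
  have hinv : Continuous fun x : ℝ => (c ^ 2 + x ^ 2)⁻¹ := by
    simpa using continuous_inv_sq_add_sq_pow hc 1
  have hmeas : AEStronglyMeasurable (fun x => log x / (c ^ 2 + x ^ 2)) := by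
    simp only [div_eq_mul_inv]
    exact measurable_log.aestronglyMeasurable.mul hinv.aestronglyMeasurable
  rw [← Ioc_union_Ioi_eq_Ioi zero_le_one]
  refine IntegrableOn.union ?_ ?_
  · have hlog : IntegrableOn log (Ioc 0 1) :=
      (intervalIntegrable_iff_integrableOn_Ioc_of_le zero_le_one).1
        intervalIntegral.intervalIntegrable_log'
    refine hlog.mul_bdd (c := (c ^ 2)⁻¹) hinv.aestronglyMeasurable
      (ae_of_all _ fun x => ?_) |>.congr (ae_of_all _ fun x => (div_eq_mul_inv _ _).symm)
    rw [norm_inv, Real.norm_of_nonneg (by positivity)]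
    gcongr
    exact le_add_of_nonneg_right (sq_nonneg x)
  · have hdom : IntegrableOn (fun x : ℝ => 2 * x ^ (-3 / 2 : ℝ)) (Ioi 1) :=
      (integrableOn_Ioi_rpow_of_lt (by norm_num) one_pos).const_mul 2
    refine hdom.mono' hmeas.restrict ?_
    filter_upwards [ae_restrict_mem measurableSet_Ioi] with x (hx : 1 < x)
    have hx0 : 0 < x := one_pos.trans hx
    have hlog : log x ≤ 2 * x ^ (-3 / 2 : ℝ) * x ^ 2 := calc
      log x ≤ x ^ (1 / 2 : ℝ) / (1 / 2) := log_le_rpow_div hx0.le one_half_pos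
      _ = 2 * x ^ (-3 / 2 : ℝ) * x ^ 2 := by
        rw [mul_assoc, ← rpow_natCast, ← rpow_add hx0]; norm_num; ring
    rw [norm_of_nonneg (div_nonneg (log_nonneg hx.le) (by positivity)),
      div_le_iff₀ (by positivity)]
    exact hlog.trans (by gcongr; exact le_add_of_nonneg_left (sq_nonneg c))

lemma integral_Ioi_one_div_sq_add_sq (hc : 0 < c) :
    ∫ x in Ioi 0, 1 / (c ^ 2 + x ^ 2) = π / (2 * c) := by
  have h (x : ℝ) : 1 / (c ^ 2 + x ^ 2) = (c ^ 2)⁻¹ * (1 + (c⁻¹ * x) ^ 2)⁻¹ := by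
    field_simp
  simp_rw [h]
  rw [integral_const_mul, integral_comp_mul_left_Ioi (fun t => (1 + t ^ 2)⁻¹) 0 (inv_pos.2 hc),
    mul_zero, integral_Ioi_inv_one_add_sq, arctan_zero]
  field_simp
  ring

lemma integral_Ioi_comp_const_div (G : ℝ → ℝ) {a : ℝ} (ha : 0 < a) :
    ∫ x in Ioi 0, a / x ^ 2 * G (a / x) = ∫ x in Ioi 0, G x := by
  have hinvol : ∀ x ∈ Set.Ioi (0 : ℝ), a / x ∈ Set.Ioi 0 ∧ a / (a / x) = x :=
    fun x (hx : 0 < x) => ⟨div_pos ha hx, div_div_cancel₀ ha.ne'⟩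
  have himg : (fun x => a / x) '' Set.Ioi 0 = Set.Ioi 0 :=
    Subset.antisymm (image_subset_iff.2 fun x hx => (hinvol x hx).1)
      fun x hx => ⟨a / x, (hinvol x hx).1, (hinvol x hx).2⟩
  have hinj : InjOn (fun x => a / x) (Set.Ioi 0) := fun x hx y hy hxy => by
    rw [← (hinvol x hx).2, ← (hinvol y hy).2]; exact congrArg (a / ·) hxy
  have hderiv (x : ℝ) (hx : x ∈ Set.Ioi 0) :
      HasDerivWithinAt (fun x => a / x) (-a / x ^ 2) (Set.Ioi 0) x := by
    simpa using ((hasDerivAt_const x a).fun_div (hasDerivAt_id' x) (ne_of_gt hx)).hasDerivWithinAt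
  conv_rhs => rw [← himg, integral_image_eq_integral_abs_deriv_smul measurableSet_Ioi hderiv hinj]
  refine setIntegral_congr_fun measurableSet_Ioi fun x _ => ?_
  rw [smul_eq_mul, abs_div, abs_neg, abs_of_pos ha, abs_of_nonneg (sq_nonneg x)]

lemma integral_Ioi_log_div_sq_add_sq (hc : c ≠ 0) :
    ∫ x in Ioi 0, log x / (c ^ 2 + x ^ 2) = log c * ∫ x in Ioi 0, 1 / (c ^ 2 + x ^ 2) := by
  have hsym : ∫ x in Ioi 0, log x / (c ^ 2 + x ^ 2) =
      ∫ x in Ioi 0, (2 * log c * (1 / (c ^ 2 + x ^ 2)) - log x / (c ^ 2 + x ^ 2)) := by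
    rw [← integral_Ioi_comp_const_div _ (by positivity : 0 < c ^ 2)]
    refine setIntegral_congr_fun measurableSet_Ioi fun x (hx : 0 < x) => ?_
    rw [log_div (by positivity) hx.ne', log_pow]
    field_simp
    ring
  rw [integral_sub ((integrable_one_div_sq_add_sq hc).integrableOn.const_mul _)
    (integrableOn_log_div_sq_add_sq hc), integral_const_mul] at hsym
  linarith

lemma hasDerivAt_mul_div_sq_add_sq_pow {g : ℝ → ℝ} {g' x : ℝ} (hc : c ≠ 0) (n : ℕ)
    (hg : HasDerivAt g g' x) :
    HasDerivAt (fun x => x * g x / (c ^ 2 + x ^ 2) ^ (n + 1))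
      ((2 * n + 2) * c ^ 2 * (g x / (c ^ 2 + x ^ 2) ^ (n + 2))
        - (2 * n + 1) * (g x / (c ^ 2 + x ^ 2) ^ (n + 1))
        + x * g' / (c ^ 2 + x ^ 2) ^ (n + 1)) x := by
  have hP := ((hasDerivAt_pow 2 x).const_add (c ^ 2)).fun_pow (n + 1)
  refine (((hasDerivAt_id' x).fun_mul hg).fun_div hP (by positivity)).congr_deriv ?_
  simp only [Nat.add_sub_cancel]
  field_simp
  push_cast
  ring

lemma tendsto_mul_div_sq_add_sq_pow_atTop {g : ℝ → ℝ}
    (hg : Tendsto (fun x => g x / x) atTop (𝓝 0)) (n : ℕ) :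
    Tendsto (fun x => x * g x / (c ^ 2 + x ^ 2) ^ (n + 1)) atTop (𝓝 0) := by
  have hbdd :
      IsBoundedUnder (· ≤ ·) atTop fun x => ‖x ^ 2 / (c ^ 2 + x ^ 2) ^ (n + 1)‖ := by
    refine isBoundedUnder_of_eventually_le (a := 1) ?_
    filter_upwards [eventually_ge_atTop 1] with x hx
    have hx2 : x ^ 2 ≤ c ^ 2 + x ^ 2 := le_add_of_nonneg_left (sq_nonneg c)
    have hP : 1 ≤ c ^ 2 + x ^ 2 := (one_le_pow₀ hx).trans hx2
    rw [norm_of_nonneg (by positivity), div_le_one (by positivity)]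
    exact hx2.trans (le_self_pow₀ hP n.succ_ne_zero)
  refine (hg.zero_mul_isBoundedUnder_le hbdd).congr' ?_
  filter_upwards [eventually_gt_atTop 0] with x hx
  field_simp

theorem integral_Ioi_div_sq_add_sq_pow_reduction {g h : ℝ → ℝ} (hc : c ≠ 0) (n : ℕ)
    (hg : ∀ x > 0, HasDerivAt g (h x / x) x) (hcont : Continuous fun x => x * g x)
    (htop : Tendsto (fun x => g x / x) atTop (𝓝 0))
    (hgi : IntegrableOn (fun x => g x / (c ^ 2 + x ^ 2)) (Ioi 0))
    (hhi : IntegrableOn (fun x => h x / (c ^ 2 + x ^ 2)) (Ioi 0)) :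
    (2 * n + 2) * c ^ 2 * ∫ x in Ioi 0, g x / (c ^ 2 + x ^ 2) ^ (n + 2) =
      (2 * n + 1) * (∫ x in Ioi 0, g x / (c ^ 2 + x ^ 2) ^ (n + 1)) -
        ∫ x in Ioi 0, h x / (c ^ 2 + x ^ 2) ^ (n + 1) := by
  have hint₂ := (integrableOn_div_sq_add_sq_pow hc hgi (n + 1)).const_mul ((2 * n + 2) * c ^ 2)
  have hint₁ := (integrableOn_div_sq_add_sq_pow hc hgi n).const_mul (2 * n + 1)
  have hint₀ := integrableOn_div_sq_add_sq_pow hc hhi n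
  have hderiv (x : ℝ) (hx : 0 < x) :
      HasDerivAt (fun x => x * g x / (c ^ 2 + x ^ 2) ^ (n + 1))
        ((2 * n + 2) * c ^ 2 * (g x / (c ^ 2 + x ^ 2) ^ (n + 2))
          - (2 * n + 1) * (g x / (c ^ 2 + x ^ 2) ^ (n + 1))
          + h x / (c ^ 2 + x ^ 2) ^ (n + 1)) x := by
    simpa only [mul_div_cancel₀ _ hx.ne']
      using hasDerivAt_mul_div_sq_add_sq_pow hc n (hg x hx)
  have hftc := integral_Ioi_of_hasDerivAt_of_tendsto
    (hcont.div (by fun_prop) fun x => by positivity).continuousWithinAt hderiv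
    ((hint₂.sub' hint₁).add hint₀) (tendsto_mul_div_sq_add_sq_pow_atTop htop n)
  rw [integral_add (hint₂.sub' hint₁) hint₀, integral_sub hint₂ hint₁, integral_const_mul,
    integral_const_mul] at hftc
  simp only [Pi.div_apply, zero_mul, zero_div, sub_zero] at hftc
  linarith

lemma integral_Ioi_one_div_sq_add_sq_pow_reduction (hc : c ≠ 0) (n : ℕ) :
    (2 * n + 2) * c ^ 2 * ∫ x in Ioi 0, 1 / (c ^ 2 + x ^ 2) ^ (n + 2) =
      (2 * n + 1) * ∫ x in Ioi 0, 1 / (c ^ 2 + x ^ 2) ^ (n + 1) := by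
  simpa using integral_Ioi_div_sq_add_sq_pow_reduction (g := fun _ => 1) (h := 0) hc n
    (fun x _ => by simpa using hasDerivAt_const x (1 : ℝ)) (continuous_id.mul continuous_const)
    (by simpa using tendsto_inv_atTop_zero) (integrable_one_div_sq_add_sq hc).integrableOn
    (by simp)

lemma integral_Ioi_log_div_sq_add_sq_pow_reduction (hc : c ≠ 0) (n : ℕ) :
    (2 * n + 2) * c ^ 2 * ∫ x in Ioi 0, log x / (c ^ 2 + x ^ 2) ^ (n + 2) =
      (2 * n + 1) * (∫ x in Ioi 0, log x / (c ^ 2 + x ^ 2) ^ (n + 1)) -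
        ∫ x in Ioi 0, 1 / (c ^ 2 + x ^ 2) ^ (n + 1) :=
  integral_Ioi_div_sq_add_sq_pow_reduction hc n
    (fun x hx => by simpa [one_div] using hasDerivAt_log hx.ne') continuous_mul_log
    (by simpa using tendsto_pow_log_div_mul_add_atTop 1 0 1 one_ne_zero)
    (integrableOn_log_div_sq_add_sq hc) (integrable_one_div_sq_add_sq hc).integrableOn

theorem integral_Ioi_one_div_sq_add_sq_pow (hc : 0 < c) (n : ℕ) :
    ∫ x in Ioi 0, 1 / (c ^ 2 + x ^ 2) ^ (n + 1) =
      π / (2 * c) ^ (2 * n + 1) * n.centralBinom := by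
  induction n with
  | zero => simpa using integral_Ioi_one_div_sq_add_sq hc
  | succ n ih =>
    have hred := integral_Ioi_one_div_sq_add_sq_pow_reduction hc.ne' n
    rw [ih] at hred
    apply mul_left_cancel₀ (by positivity : (2 * n + 2) * c ^ 2 ≠ 0)
    rw [hred, show 2 * (n + 1) + 1 = 2 * n + 1 + 2 by ring, pow_add (2 * c) (2 * n + 1) 2]
    field_simp
    exact_mod_cast (Nat.succ_mul_centralBinom_succ n).symm

theorem integral_Ioi_log_div_sq_add_sq_pow (hc : c ≠ 0) (n : ℕ) :
    ∫ x in Ioi 0, log x / (c ^ 2 + x ^ 2) ^ (n + 1) =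
      (∫ x in Ioi 0, 1 / (c ^ 2 + x ^ 2) ^ (n + 1)) *
        (log c - ∑ k ∈ Icc 1 n, 1 / (2 * (k : ℝ) - 1)) := by
  induction n with
  | zero => simpa [mul_comm] using integral_Ioi_log_div_sq_add_sq hc
  | succ n ih =>
    have hA := integral_Ioi_one_div_sq_add_sq_pow_reduction hc n
    have hB := integral_Ioi_log_div_sq_add_sq_pow_reduction hc n
    rw [ih] at hB
    set A := ∫ x in Ioi 0, 1 / (c ^ 2 + x ^ 2) ^ (n + 1)
    set S := ∑ k ∈ Icc 1 n, 1 / (2 * (k : ℝ) - 1)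
    have hsum : ∑ k ∈ Icc 1 (n + 1), 1 / (2 * (k : ℝ) - 1) = S + 1 / (2 * n + 1) := by
      rw [sum_Icc_succ_top (by omega)]
      congr 1
      push_cast
      ring
    have hinv : (2 * n + 1) * (1 / (2 * (n : ℝ) + 1)) = 1 := by field_simp
    apply mul_left_cancel₀ (by positivity : (2 * n + 2) * c ^ 2 ≠ 0)
    rw [hsum]
    linear_combination hB - (log c - S - 1 / (2 * (n : ℝ) + 1)) * hA + A * hinv

end

/-- GR 4.231.7 (equivalent form): for `n ∈ ℕ` and `c > 0`,
`∫_0^∞ ln x / (c²+x²)^(n+1) dx = (π/(2c)^{2n+1}) C(2n,n) (ln c - ∑_{k=1}^n 1/(2k-1))`. -/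
theorem integral_log_div_sq_add_sq_pow (n : ℕ) (c : ℝ) (hc : 0 < c) :
    ∫ x in Set.Ioi (0:ℝ), Real.log x / (c ^ 2 + x ^ 2) ^ (n + 1) =
      (Real.pi / (2 * c) ^ (2 * n + 1)) * (Nat.choose (2 * n) n : ℝ) *
        (Real.log c - ∑ k ∈ Finset.Icc 1 n, 1 / (2 * (k : ℝ) - 1)) := by
  rw [← Nat.centralBinom_eq_two_mul_choose, integral_Ioi_log_div_sq_add_sq_pow hc.ne',
    integral_Ioi_one_div_sq_add_sq_pow hc]
end

section
/- For every natural number n and every real number x > 0, the integral from 0 to x of dt/(1+t^2)^{n+1} equals (C(2n, n)/2^{2n})·(arctan x + ∑_{j=1}^{n} (2^{2j}/(2j·C(2j, j)))·x/(x^2+1)^j), where C(2j, j) denotes the central binomial coefficient. -/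
open Real Finset

noncomputable def Sfun (n : ℕ) (x : ℝ) : ℝ :=
  Real.arctan x + ∑ j ∈ Finset.Icc 1 n,
    (2 ^ (2 * j) / (2 * (j : ℝ) * (Nat.choose (2 * j) j : ℝ))) * (x / (x ^ 2 + 1) ^ j)

noncomputable def cfun (n : ℕ) : ℝ := (Nat.choose (2 * n) n : ℝ) / 2 ^ (2 * n)

lemma choose_pos' (n : ℕ) : (0:ℝ) < (Nat.choose (2*n) n : ℝ) := by
  exact_mod_cast Nat.choose_pos (by omega)

lemma cfun_succ (n : ℕ) : cfun (n+1) = (2*n+1)/(2*n+2) * cfun n := by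
  have h := Nat.succ_mul_centralBinom_succ n
  simp only [Nat.centralBinom] at h
  have h' : ((n:ℝ)+1) * (Nat.choose (2*(n+1)) (n+1) : ℝ)
      = 2*(2*(n:ℝ)+1) * (Nat.choose (2*n) n : ℝ) := by
    exact_mod_cast h
  have hp : (2:ℝ)^(2*(n+1)) = 4 * 2^(2*n) := by ring
  simp only [cfun]
  rw [hp, div_eq_iff (by positivity)]
  field_simp
  linear_combination 2 * h'

lemma e2 (n : ℕ) :
    cfun (n+1) * ((2:ℝ) ^ (2*(n+1)) / (2 * ((n:ℝ)+1) * (Nat.choose (2*(n+1)) (n+1) : ℝ)))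
      = 1/(2*(n:ℝ)+2) := by
  have hc := choose_pos' (n+1)
  simp only [cfun]
  field_simp

lemma key (n : ℕ) (x : ℝ) :
    cfun (n+1) * Sfun (n+1) x
      = (2*(n:ℝ)+1)/(2*n+2) * (cfun n * Sfun n x) + (1/(2*(n:ℝ)+2)) * (x / (x^2+1)^(n+1)) := by
  have h1 : (1:ℕ) ≤ n+1 := Nat.le_add_left 1 n
  simp only [Sfun, Finset.sum_Icc_succ_top h1]
  have e1 := cfun_succ n
  have e2' := e2 n
  push_cast at e2' ⊢
  linear_combination (norm := (push_cast; ring))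
    (Real.arctan x + ∑ j ∈ Finset.Icc 1 n,
      (2 ^ (2 * j) / (2 * (j : ℝ) * (Nat.choose (2 * j) j : ℝ))) * (x / (x ^ 2 + 1) ^ j)) * e1
    + (x / (x^2+1)^(n+1)) * e2'

lemma hderiv (n : ℕ) (x : ℝ) :
    HasDerivAt (fun y => cfun n * Sfun n y) (1/(1+x^2)^(n+1)) x := by
  induction n with
  | zero =>
    have : (fun y => cfun 0 * Sfun 0 y) = fun y => Real.arctan y := by
      funext y; simp [cfun, Sfun]
    rw [this, pow_one]
    simpa using Real.hasDerivAt_arctan x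
  | succ n ih =>
    have hfun : (fun y => cfun (n+1) * Sfun (n+1) y)
        = fun y => (2*(n:ℝ)+1)/(2*n+2) * (cfun n * Sfun n y)
            + (1/(2*(n:ℝ)+2)) * (y / (y^2+1)^(n+1)) := funext (key n)
    rw [hfun]
    have hne : (x^2+1:ℝ)^(n+1) ≠ 0 := by positivity
    have hb : HasDerivAt (fun y : ℝ => (y^2+1)^(n+1))
        ((n+1 : ℕ) * (x^2+1)^n * (2*x)) x := by
      have := ((hasDerivAt_pow 2 x).add_const 1).fun_pow (n+1)
      simpa [mul_comm, mul_assoc, mul_left_comm] using this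
    have hq := (hasDerivAt_id x).fun_div hb hne
    have h := ((ih.const_mul ((2*(n:ℝ)+1)/(2*n+2))).fun_add (hq.const_mul (1/(2*(n:ℝ)+2))))
    refine h.congr_deriv ?_
    simp only [id_eq]; push_cast
    have h2 : (x^2+1:ℝ) ≠ 0 := by positivity
    have h3 : (2*(n:ℝ)+2) ≠ 0 := by positivity
    field_simp
    ring

/-- For `n ∈ ℕ` and `x > 0`,
`∫_0^x dt/(1+t²)^(n+1) = (C(2n,n)/2^{2n}) (arctan x + ∑_{j=1}^n (2^{2j}/(2j C(2j,j))) x/(x²+1)^j)`. -/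
theorem integral_one_div_one_add_sq_pow (n : ℕ) (x : ℝ) (hx : 0 < x) :
    ∫ t in (0:ℝ)..x, 1 / (1 + t ^ 2) ^ (n + 1) =
      ((Nat.choose (2 * n) n : ℝ) / 2 ^ (2 * n)) *
        (Real.arctan x +
          ∑ j ∈ Finset.Icc 1 n,
            (2 ^ (2 * j) / (2 * (j : ℝ) * (Nat.choose (2 * j) j : ℝ))) *
              (x / (x ^ 2 + 1) ^ j)) := by
  have hcont : Continuous (fun t : ℝ => 1 / (1 + t ^ 2) ^ (n + 1)) := by
    apply Continuous.div continuous_const (by continuity)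
    intro t; positivity
  have := intervalIntegral.integral_eq_sub_of_hasDerivAt
    (f := fun y => cfun n * Sfun n y)
    (fun t _ => hderiv n t) (hcont.intervalIntegrable 0 x)
  rw [this]
  simp [cfun, Sfun]
end

section
/- For every natural number n ≥ 1 and every real number x > 0, the functions g_n(x) = ∫_0^x (ln t)/(1+t^2)^{n+1} dt and f_n(x) = ∫_0^x dt/(1+t^2)^{n+1} satisfy 2n·g_n(x) - (2n-1)·g_{n-1}(x) = 2n·(ln x)·f_n(x) - ((2n-1)·ln x + 1)·f_{n-1}(x). -/
/-!
Write `pₖ(t) = 1 / (1 + t²)ᵏ`. The single identity `(t pₙ(t))' = 2n pₙ₊₁(t) - (2n - 1) pₙ(t)`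
yields both relations. Integrated over `[0, x]` it gives `2n fₙ - (2n - 1) fₙ₋₁ = x pₙ(x)`.
Multiplied by `log t`, it integrates by parts against `log` (the boundary term `t log t pₙ(t)`
vanishes at `0`, and `(log t)' · t pₙ(t) = pₙ(t)`) to
`2n gₙ - (2n - 1) gₙ₋₁ = log x · x pₙ(x) - fₙ₋₁`.
Substituting the first relation into the second gives the recurrence.
-/

open Real MeasureTheory intervalIntegral Set

theorem integral_log_mul_of_hasDerivAt_mul_self {φ φ' : ℝ → ℝ} (hφ : Continuous φ)
    (hφ' : Continuous φ') (hderiv : ∀ t, HasDerivAt (fun s => s * φ s) (φ' t) t) (x : ℝ) :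
    ∫ t in (0:ℝ)..x, log t * φ' t = log x * (x * φ x) - ∫ t in (0:ℝ)..x, φ t := by
  have hlog_int : IntervalIntegrable (fun t => log t * φ' t) volume 0 x :=
    intervalIntegrable_log'.mul_continuousOn hφ'.continuousOn
  have hφ_int : IntervalIntegrable φ volume 0 x := hφ.intervalIntegrable 0 x
  have hF_cont : ContinuousOn (fun s => log s * (s * φ s)) (uIcc 0 x) := by
    have : Continuous (fun s => s * log s * φ s) := continuous_mul_log.mul hφ
    refine (this.congr fun s => ?_).continuousOn
    ring
  have hF_deriv : ∀ t ∈ Ioo (min 0 x) (max 0 x),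
      HasDerivWithinAt (fun s => log s * (s * φ s)) (log t * φ' t + φ t) (Ioi t) t := by
    intro t ht
    have ht0 : t ≠ 0 := by
      rintro rfl
      simp only [mem_Ioo, min_lt_iff, lt_max_iff, lt_irrefl, false_or] at ht
      exact lt_asymm ht.1 ht.2
    refine (((hasDerivAt_log ht0).mul (hderiv t)).congr_deriv ?_).hasDerivWithinAt
    field_simp
    ring
  have hftc := integral_eq_sub_of_hasDeriv_right hF_cont hF_deriv (hlog_int.add hφ_int)
  rw [integral_add hlog_int hφ_int] at hftc
  simp only [log_zero, zero_mul, sub_zero] at hftc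
  linarith

theorem hasDerivAt_mul_one_div_one_add_sq_pow (n : ℕ) (t : ℝ) :
    HasDerivAt (fun s : ℝ => s * (1 / (1 + s ^ 2) ^ n))
      (2 * n * (1 / (1 + t ^ 2) ^ (n + 1)) - (2 * n - 1) * (1 / (1 + t ^ 2) ^ n)) t := by
  have hpos : (0:ℝ) < 1 + t ^ 2 := by positivity
  have hbase : HasDerivAt (fun s : ℝ => 1 + s ^ 2) (2 * t) t := by
    simpa using (hasDerivAt_pow 2 t).const_add 1
  have hprod := (hasDerivAt_id t).fun_mul ((hbase.fun_pow n).fun_inv (pow_pos hpos n).ne')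
  simp only [id, one_div] at hprod ⊢
  refine hprod.congr_deriv ?_
  -- `fun_pow` leaves the truncated exponent `n - 1`, which only simplifies once `n` is a successor.
  rcases n with _ | m
  · simp
  · simp only [Nat.add_sub_cancel, Nat.cast_add, Nat.cast_one]
    field_simp
    ring

theorem continuous_one_div_one_add_sq_pow (n : ℕ) :
    Continuous fun t : ℝ => 1 / (1 + t ^ 2) ^ n :=
  continuous_const.div (by fun_prop) fun t => by positivity

theorem g_recurrence_general (n : ℕ) (x : ℝ) :
    2 * (n : ℝ) * (∫ t in (0:ℝ)..x, Real.log t / (1 + t ^ 2) ^ (n + 1))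
      - (2 * (n : ℝ) - 1) * (∫ t in (0:ℝ)..x, Real.log t / (1 + t ^ 2) ^ n) =
    2 * (n : ℝ) * Real.log x * (∫ t in (0:ℝ)..x, 1 / (1 + t ^ 2) ^ (n + 1))
      - ((2 * (n : ℝ) - 1) * Real.log x + 1) * ∫ t in (0:ℝ)..x, 1 / (1 + t ^ 2) ^ n := by
  have hcont (k : ℕ) := continuous_one_div_one_add_sq_pow k
  have hint (k : ℕ) : IntervalIntegrable (fun t : ℝ => 1 / (1 + t ^ 2) ^ k) volume 0 x :=
    (hcont k).intervalIntegrable 0 x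
  have hlog_int (k : ℕ) : IntervalIntegrable (fun t => log t / (1 + t ^ 2) ^ k) volume 0 x := by
    simpa only [mul_one_div] using intervalIntegrable_log'.mul_continuousOn (hcont k).continuousOn
  have hf := integral_eq_sub_of_hasDerivAt (fun t _ => hasDerivAt_mul_one_div_one_add_sq_pow n t)
    (((hint _).const_mul _).sub ((hint _).const_mul _))
  rw [integral_sub ((hint _).const_mul _) ((hint _).const_mul _),
    intervalIntegral.integral_const_mul, intervalIntegral.integral_const_mul, zero_mul,
    sub_zero] at hf
  have hg := integral_log_mul_of_hasDerivAt_mul_self (hcont n)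
    (((hcont _).const_mul _).sub ((hcont _).const_mul _))
    (hasDerivAt_mul_one_div_one_add_sq_pow n) x
  have hsplit : ∫ t in (0:ℝ)..x,
      log t * (2 * n * (1 / (1 + t ^ 2) ^ (n + 1)) - (2 * n - 1) * (1 / (1 + t ^ 2) ^ n)) =
      2 * (n : ℝ) * (∫ t in (0:ℝ)..x, log t / (1 + t ^ 2) ^ (n + 1))
        - (2 * (n : ℝ) - 1) * (∫ t in (0:ℝ)..x, log t / (1 + t ^ 2) ^ n) := by
    rw [← intervalIntegral.integral_const_mul, ← intervalIntegral.integral_const_mul,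
      ← integral_sub ((hlog_int _).const_mul _) ((hlog_int _).const_mul _)]
    congr 1 with t
    ring
  simp only [Pi.sub_apply] at hg
  linear_combination hg - hsplit - log x * hf

/-- The functions `gₙ(x) = ∫_0^x ln t/(1+t²)^(n+1) dt` and `fₙ(x) = ∫_0^x dt/(1+t²)^(n+1)`
satisfy `2n gₙ - (2n-1) g_{n-1} = 2n (ln x) fₙ - ((2n-1) ln x + 1) f_{n-1}` for `n ≥ 1`. -/
theorem g_recurrence (n : ℕ) (hn : 1 ≤ n) (x : ℝ) (hx : 0 < x) :
    2 * (n : ℝ) * (∫ t in (0:ℝ)..x, Real.log t / (1 + t ^ 2) ^ (n + 1))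
      - (2 * (n : ℝ) - 1) * (∫ t in (0:ℝ)..x, Real.log t / (1 + t ^ 2) ^ n) =
    2 * (n : ℝ) * Real.log x * (∫ t in (0:ℝ)..x, 1 / (1 + t ^ 2) ^ (n + 1))
      - ((2 * (n : ℝ) - 1) * Real.log x + 1) * ∫ t in (0:ℝ)..x, 1 / (1 + t ^ 2) ^ n :=
  g_recurrence_general n x
end

section
/- For every natural number n and every real number x with 0 < x < 1, the integral g_n(x) = ∫_0^x (ln t)/(1+t^2)^{n+1} dt equals the convergent series ∑_{k=0}^{∞} (-1)^k·C(n+k, k)·(x^{2k+1}/(2k+1))·(ln x - 1/(2k+1)). -/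
/-!
For `|t| < 1` the negative binomial series gives
`(1 + t²)^{-(n+1)} = ∑ₖ (-1)^k C(n+k,k) t^{2k}`, and each term of the resulting expansion of
`ln t / (1 + t²)^{n+1}` integrates in closed form, since
`x^{m+1}/(m+1) · (ln x - 1/(m+1))` is an antiderivative of `t^m ln t` vanishing at `0⁺`.
Integrating term by term is legitimate on `[0, x]` with `x < 1` because the integrals of the
absolute values of the terms are dominated by `C(n+k,k) x^{2k} ∫₀ˣ |ln t| dt`, which is summable.
-/

open Real Filter Set MeasureTheory
open scoped Topology

section PowMulLog

variable (m : ℕ)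

lemma hasDerivAt_pow_succ_div_mul_log_sub {t : ℝ} (ht : t ≠ 0) :
    HasDerivAt (fun t => t ^ (m + 1) / (m + 1) * (log t - 1 / (m + 1))) (t ^ m * log t) t := by
  have hpow : HasDerivAt (fun t : ℝ => t ^ (m + 1) / (m + 1)) (t ^ m) t := by
    refine ((hasDerivAt_pow (m + 1) t).div_const ((m : ℝ) + 1)).congr_deriv ?_
    push_cast
    field_simp
  refine (hpow.mul ((hasDerivAt_log ht).sub_const (1 / ((m : ℝ) + 1)))).congr_deriv ?_
  field_simp
  ring

lemma tendsto_pow_succ_div_mul_log_sub_nhdsGT_zero :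
    Tendsto (fun t : ℝ => t ^ (m + 1) / (m + 1) * (log t - 1 / (m + 1))) (𝓝[>] 0) (𝓝 0) := by
  have hlog : Tendsto (fun t : ℝ => log t * t ^ (m + 1)) (𝓝[>] 0) (𝓝 0) := by
    simpa only [rpow_natCast] using
      tendsto_log_mul_rpow_nhdsGT_zero (r := (m + 1 : ℕ)) (by positivity)
  have hpow : Tendsto (fun t : ℝ => t ^ (m + 1)) (𝓝[>] 0) (𝓝 0) := by
    simpa using ((continuous_pow (m + 1)).tendsto (0 : ℝ)).mono_left nhdsWithin_le_nhds
  convert (hlog.div_const ((m : ℝ) + 1)).sub (hpow.div_const (((m : ℝ) + 1) ^ 2)) using 1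
  · ext t
    field_simp
  · simp

lemma intervalIntegrable_pow_mul_log (a b : ℝ) :
    IntervalIntegrable (fun t => t ^ m * log t) volume a b :=
  intervalIntegral.intervalIntegrable_log'.continuousOn_mul (continuous_pow m).continuousOn

lemma integral_pow_mul_log {x : ℝ} (hx : 0 < x) :
    ∫ t in 0..x, t ^ m * log t = x ^ (m + 1) / (m + 1) * (log x - 1 / (m + 1)) := by
  rw [intervalIntegral.integral_eq_sub_of_hasDerivAt_of_tendsto hx
    (fun t ht => hasDerivAt_pow_succ_div_mul_log_sub m ht.1.ne')
    (intervalIntegrable_pow_mul_log m 0 x) (tendsto_pow_succ_div_mul_log_sub_nhdsGT_zero m)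
    ((hasDerivAt_pow_succ_div_mul_log_sub m hx.ne').continuousAt.tendsto.mono_left
      nhdsWithin_le_nhds), sub_zero]

end PowMulLog

theorem intervalIntegral.hasSum_integral_of_summable_integral_norm {E : Type*}
    [NormedAddCommGroup E] [NormedSpace ℝ E] {ι : Type*} [Countable ι] {F : ι → ℝ → E}
    {a b : ℝ} (hab : a ≤ b) (hF_int : ∀ i, IntervalIntegrable (F i) volume a b)
    (hF_sum : Summable fun i => ∫ t in a..b, ‖F i t‖) :
    HasSum (fun i => ∫ t in a..b, F i t) (∫ t in a..b, ∑' i, F i t) := by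
  simp only [intervalIntegral.integral_of_le hab] at hF_sum ⊢
  exact MeasureTheory.hasSum_integral_of_summable_integral_norm (fun i => (hF_int i).1) hF_sum

lemma hasSum_choose_mul_neg_sq_pow {𝕜 : Type*} [NormedField 𝕜] [CompleteSpace 𝕜] (n : ℕ)
    {t : 𝕜} (ht : ‖t‖ < 1) :
    HasSum (fun k : ℕ => (-1 : 𝕜) ^ k * (n + k).choose k * t ^ (2 * k))
      (1 / (1 + t ^ 2) ^ (n + 1)) := by
  have hr : ‖-t ^ 2‖ < 1 := by
    rw [norm_neg, norm_pow]
    nlinarith [norm_nonneg t]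
  have h := hasSum_choose_mul_geometric_of_norm_lt_one n hr
  rw [sub_neg_eq_add] at h
  have hterm : (fun k : ℕ => (-1 : 𝕜) ^ k * (n + k).choose k * t ^ (2 * k)) =
      fun k => ((k + n).choose n : 𝕜) * (-t ^ 2) ^ k := by
    ext k
    rw [add_comm n k, Nat.choose_symm_add, neg_pow, pow_mul]
    ring
  rwa [hterm]

noncomputable def gIntegrandTerm (n k : ℕ) (t : ℝ) : ℝ :=
  (-1) ^ k * (n + k).choose k * (t ^ (2 * k) * log t)

section gIntegrandTerm

variable (n : ℕ)

lemma hasSum_gIntegrandTerm {t : ℝ} (ht : |t| < 1) :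
    HasSum (fun k => gIntegrandTerm n k t) (log t / (1 + t ^ 2) ^ (n + 1)) := by
  simpa only [gIntegrandTerm, ← mul_assoc, div_eq_inv_mul, one_div, mul_one]
    using (hasSum_choose_mul_neg_sq_pow n (t := t) ht).mul_right (log t)

lemma intervalIntegrable_gIntegrandTerm (k : ℕ) (a b : ℝ) :
    IntervalIntegrable (gIntegrandTerm n k) volume a b :=
  (intervalIntegrable_pow_mul_log (2 * k) a b).const_mul _

lemma integral_gIntegrandTerm (k : ℕ) {x : ℝ} (hx : 0 < x) :
    ∫ t in 0..x, gIntegrandTerm n k t =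
      (-1) ^ k * (n + k).choose k * (x ^ (2 * k + 1) / (2 * k + 1)) *
        (log x - 1 / (2 * k + 1)) := by
  simp only [gIntegrandTerm]
  rw [intervalIntegral.integral_const_mul, integral_pow_mul_log _ hx]
  push_cast
  ring

lemma summable_integral_norm_gIntegrandTerm {x : ℝ} (hx : 0 ≤ x) (hx1 : x < 1) :
    Summable fun k => ∫ t in 0..x, ‖gIntegrandTerm n k t‖ := by
  have hgeom : Summable fun k : ℕ => ((k + n).choose n : ℝ) * (x ^ 2) ^ k := by
    refine summable_choose_mul_geometric_of_norm_lt_one n ?_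
    rw [Real.norm_of_nonneg (by positivity)]
    nlinarith
  refine Summable.of_nonneg_of_le
    (fun k => intervalIntegral.integral_nonneg hx fun t _ => norm_nonneg _)
    (fun k => ?_) (hgeom.mul_right (∫ t in 0..x, ‖log t‖))
  rw [← intervalIntegral.integral_const_mul]
  refine intervalIntegral.integral_mono_on hx (intervalIntegrable_gIntegrandTerm n k 0 x).norm
    (intervalIntegral.intervalIntegrable_log'.norm.const_mul _) fun t ht => ?_
  rw [gIntegrandTerm, add_comm n k, Nat.choose_symm_add, norm_mul, norm_mul, norm_mul, norm_pow,
    norm_neg, norm_one, one_pow, one_mul, Real.norm_natCast, norm_pow, pow_mul, ← mul_assoc]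
  gcongr
  rw [Real.norm_of_nonneg ht.1]
  exact ht.2

end gIntegrandTerm

/-- For `n ∈ ℕ` and `0 < x < 1`, the series
`∑_{k=0}^∞ (-1)^k C(n+k,k) (x^{2k+1}/(2k+1)) (ln x - 1/(2k+1))`
converges to `gₙ(x) = ∫_0^x ln t/(1+t²)^(n+1) dt`. -/
theorem g_series (n : ℕ) (x : ℝ) (hx : 0 < x) (hx1 : x < 1) :
    HasSum
      (fun k : ℕ =>
        (-1 : ℝ) ^ k * (Nat.choose (n + k) k : ℝ) * (x ^ (2 * k + 1) / (2 * (k : ℝ) + 1)) *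
          (Real.log x - 1 / (2 * (k : ℝ) + 1)))
      (∫ t in (0:ℝ)..x, Real.log t / (1 + t ^ 2) ^ (n + 1)) := by
  have hsum := intervalIntegral.hasSum_integral_of_summable_integral_norm hx.le
    (intervalIntegrable_gIntegrandTerm n · 0 x) (summable_integral_norm_gIntegrandTerm n hx.le hx1)
  have htsum : ∫ t in 0..x, ∑' k, gIntegrandTerm n k t =
      ∫ t in 0..x, log t / (1 + t ^ 2) ^ (n + 1) := by
    refine intervalIntegral.integral_congr fun t ht => (hasSum_gIntegrandTerm n ?_).tsum_eq
    rw [uIcc_of_le hx.le] at ht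
    rw [abs_of_nonneg ht.1]
    exact ht.2.trans_lt hx1
  simpa only [integral_gIntegrandTerm n _ hx, htsum] using hsum
end

section
/- For every real number x with 0 < x < 4, the series ∑_{k=1}^{∞} x^k/(k·C(2k, k)) converges and equals 2·√x·arcsin(√x/2)/√(4-x); in particular, ∑_{k=1}^{∞} 2^k/(k·C(2k, k)) = π/2. -/
/-!
Integration by parts gives `(4n+6) Jₙ₊₁ = (n+1) Jₙ` for `Jₙ = ∫₀¹ (s(1-s))ⁿ ds`, which is also
the recurrence of `2 / ((n+1) C(2n+2, n+1))`; hence the `k`-th term of the series is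
`xᵏ/2 · ∫₀¹ (s(1-s))ᵏ⁻¹ ds`. As `s(1-s) ≤ 1/4`, for `|x| < 4` the geometric series may be
summed under the integral, giving `∫₀¹ (x/2) / (1 - x s(1-s)) ds`. With
`c = √x / √(4-x)` the substitution `u = c(2s-1)` turns this into `2c arctan c`, and
`arctan c = arcsin (√x/2)`. At `x = 2`, `arcsin (√2/2) = π/4`.
-/

open Real intervalIntegral

theorem hasDerivAt_two_mul_sub_one_mul_pow (n : ℕ) (s : ℝ) :
    HasDerivAt (fun s : ℝ => (2 * s - 1) * (s * (1 - s)) ^ (n + 1))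
      ((4 * n + 6) * (s * (1 - s)) ^ (n + 1) - (n + 1) * (s * (1 - s)) ^ n) s := by
  have hp : HasDerivAt (fun s : ℝ => s * (1 - s)) (1 - 2 * s) s :=
    ((hasDerivAt_id' s).mul ((hasDerivAt_id' s).const_sub 1)).congr_deriv (by ring)
  have hl : HasDerivAt (fun s : ℝ => 2 * s - 1) 2 s :=
    (((hasDerivAt_id' s).const_mul 2).sub_const 1).congr_deriv (by ring)
  refine (hl.mul (hp.fun_pow (n + 1))).congr_deriv ?_
  push_cast
  ring

theorem integral_mul_one_sub_pow_succ (n : ℕ) :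
    ∫ s in (0:ℝ)..1, (s * (1 - s)) ^ (n + 1) =
      (n + 1) / (2 * (2 * n + 3)) * ∫ s in (0:ℝ)..1, (s * (1 - s)) ^ n := by
  have hint : ∀ m : ℕ,
      IntervalIntegrable (fun s : ℝ => (s * (1 - s)) ^ m) MeasureTheory.volume 0 1 :=
    fun m => (by fun_prop : Continuous _).intervalIntegrable _ _
  have hFTC := integral_eq_sub_of_hasDerivAt (fun s _ => hasDerivAt_two_mul_sub_one_mul_pow n s)
    (((hint (n + 1)).const_mul _).sub ((hint n).const_mul _))
  rw [integral_sub ((hint (n + 1)).const_mul _) ((hint n).const_mul _), integral_const_mul,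
    integral_const_mul] at hFTC
  norm_num at hFTC
  rw [div_mul_eq_mul_div, eq_div_iff (by positivity)]
  linarith

theorem integral_mul_one_sub_pow (n : ℕ) :
    ∫ s in (0:ℝ)..1, (s * (1 - s)) ^ n = 2 / ((n + 1) * (n + 1).centralBinom) := by
  induction n with
  | zero => norm_num [Nat.centralBinom_eq_two_mul_choose]
  | succ n ih =>
    have hrec : ((n + 2 : ℕ) : ℝ) * (n + 2).centralBinom =
        2 * (2 * n + 3) * (n + 1).centralBinom := by
      exact_mod_cast Nat.succ_mul_centralBinom_succ (n + 1)
    rw [integral_mul_one_sub_pow_succ, ih]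
    push_cast at hrec ⊢
    rw [show (n : ℝ) + 1 + 1 = n + 2 by ring, hrec]
    field_simp

theorem arcsin_sqrt_div_two_eq_arctan {x : ℝ} (hx0 : 0 ≤ x) (hx4 : x < 4) :
    arcsin (√x / 2) = arctan (√x / √(4 - x)) := by
  have hsqrt : √x < 2 := by
    rw [show (2 : ℝ) = √4 by rw [show (4 : ℝ) = 2 ^ 2 by norm_num, sqrt_sq zero_le_two]]
    exact sqrt_lt_sqrt hx0 hx4
  rw [arcsin_eq_arctan ⟨by linarith [sqrt_nonneg x], by linarith⟩, div_pow, sq_sqrt hx0,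
    show 1 - x / 2 ^ 2 = (4 - x) / 2 ^ 2 by ring, sqrt_div' _ (by norm_num : (0:ℝ) ≤ 2 ^ 2),
    sqrt_sq zero_le_two, div_div_div_cancel_right₀ two_ne_zero]

theorem integral_div_one_sub_mul_mul_one_sub {x : ℝ} (hx0 : 0 < x) (hx4 : x < 4) :
    ∫ s in (0:ℝ)..1, x / 2 / (1 - x * (s * (1 - s))) = 2 * √x * arcsin (√x / 2) / √(4 - x) := by
  set c := √x / √(4 - x) with hc
  have hc0 : 0 < c := div_pos (sqrt_pos.2 hx0) (sqrt_pos.2 (by linarith))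
  have hc2 : c ^ 2 = x / (4 - x) := by rw [hc, div_pow, sq_sqrt hx0.le, sq_sqrt (by linarith)]
  have hintegrand : ∀ s : ℝ,
      x / 2 / (1 - x * (s * (1 - s))) = 2 * c ^ 2 * (1 + (2 * c * s - c) ^ 2)⁻¹ := by
    intro s
    have h4x : (4 - x) ≠ 0 := by linarith
    have : 1 - x * (s * (1 - s)) = (4 - x) / 4 * (1 + (2 * c * s - c) ^ 2) := by
      rw [show (2 * c * s - c) ^ 2 = c ^ 2 * (2 * s - 1) ^ 2 by ring, hc2]
      field_simp
      ring
    rw [this, hc2]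
    field_simp
    norm_num
  simp_rw [hintegrand, integral_const_mul,
    integral_comp_mul_sub (fun u => (1 + u ^ 2)⁻¹) (by positivity : 2 * c ≠ 0)]
  rw [integral_inv_one_add_sq, arcsin_sqrt_div_two_eq_arctan hx0.le hx4, ← hc, smul_eq_mul,
    mul_one, mul_zero, zero_sub, two_mul c, add_sub_cancel_right, arctan_neg, hc]
  field_simp
  ring

theorem hasSum_pow_succ_div_succ_mul_centralBinom {x : ℝ} (hx : |x| < 4) :
    HasSum (fun n : ℕ => x ^ (n + 1) / ((n + 1) * (n + 1).centralBinom))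
      (∫ s in (0:ℝ)..1, x / 2 / (1 - x * (s * (1 - s)))) := by
  have hterm : ∀ n : ℕ, x ^ (n + 1) / ((n + 1) * (n + 1).centralBinom) =
      ∫ s in (0:ℝ)..1, x ^ (n + 1) / 2 * (s * (1 - s)) ^ n := by
    intro n
    rw [integral_const_mul, integral_mul_one_sub_pow]
    field_simp
  have hquarter : ∀ s ∈ Set.uIoc (0:ℝ) 1, |s * (1 - s)| ≤ 1 / 4 := by
    intro s hs
    rw [Set.uIoc_of_le zero_le_one] at hs
    rw [abs_of_nonneg (mul_nonneg hs.1.le (sub_nonneg.2 hs.2))]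
    nlinarith [sq_nonneg (2 * s - 1)]
  simp_rw [hterm]
  refine hasSum_integral_of_dominated_convergence (fun n _ => |x| / 2 * (|x| / 4) ^ n)
    (fun n => (by fun_prop : Continuous _).aestronglyMeasurable) (fun n => ?_)
    (MeasureTheory.ae_of_all _ fun _ _ => ?_) intervalIntegrable_const
    (MeasureTheory.ae_of_all _ fun s hs => ?_)
  · refine MeasureTheory.ae_of_all _ fun s hs => ?_
    rw [norm_mul, norm_div, norm_pow, norm_pow, Real.norm_eq_abs, Real.norm_eq_abs,
      Real.norm_eq_abs, abs_two]
    calc |x| ^ (n + 1) / 2 * |s * (1 - s)| ^ n ≤ |x| ^ (n + 1) / 2 * (1 / 4) ^ n := by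
          gcongr
          exact hquarter s hs
      _ = |x| / 2 * (|x| / 4) ^ n := by ring
  · exact (summable_geometric_of_lt_one (by positivity) (by linarith)).mul_left _
  · have hxp : |x * (s * (1 - s))| < 1 := by
      rw [abs_mul]
      nlinarith [hquarter s hs, abs_nonneg x, abs_nonneg (s * (1 - s))]
    rw [div_eq_mul_inv (x / 2)]
    exact ((hasSum_geometric_of_abs_lt_one hxp).mul_left (x / 2)).congr_fun fun n => by
      rw [mul_pow x, pow_succ]
      ring

theorem hasSum_pow_succ_div_succ_mul_choose {x : ℝ} (hx0 : 0 < x) (hx4 : x < 4) :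
    HasSum (fun k : ℕ => x ^ (k + 1) / (((k : ℝ) + 1) * (Nat.choose (2 * (k + 1)) (k + 1) : ℝ)))
      (2 * √x * arcsin (√x / 2) / √(4 - x)) := by
  rw [← integral_div_one_sub_mul_mul_one_sub hx0 hx4]
  simpa only [Nat.centralBinom_eq_two_mul_choose] using
    hasSum_pow_succ_div_succ_mul_centralBinom (abs_lt.2 ⟨by linarith, hx4⟩)

/-- For `0 < x < 4`, `∑_{k=1}^∞ x^k/(k C(2k,k)) = 2 √x arcsin(√x/2)/√(4-x)`;
in particular `∑_{k=1}^∞ 2^k/(k C(2k,k)) = π/2`. -/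
theorem central_binomial_series :
    (∀ x : ℝ, 0 < x → x < 4 →
      HasSum (fun k : ℕ => x ^ (k + 1) / (((k : ℝ) + 1) * (Nat.choose (2 * (k + 1)) (k + 1) : ℝ)))
        (2 * Real.sqrt x * Real.arcsin (Real.sqrt x / 2) / Real.sqrt (4 - x))) ∧
    HasSum (fun k : ℕ => (2 : ℝ) ^ (k + 1) / (((k : ℝ) + 1) * (Nat.choose (2 * (k + 1)) (k + 1) : ℝ)))
      (Real.pi / 2) := by
  refine ⟨fun x hx0 hx4 => hasSum_pow_succ_div_succ_mul_choose hx0 hx4, ?_⟩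
  have harcsin : arcsin (√2 / 2) = π / 4 := by
    rw [← sin_pi_div_four, arcsin_sin (by linarith [pi_pos]) (by linarith [pi_pos])]
  have hvalue : 2 * √2 * arcsin (√2 / 2) / √(4 - 2) = π / 2 := by
    rw [harcsin, show (4 : ℝ) - 2 = 2 by norm_num]
    field_simp
    ring
  simpa only [hvalue] using hasSum_pow_succ_div_succ_mul_choose two_pos (by norm_num)
end
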